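/- Let 0 < λ < 1, set ν = 1 − λ, and let k, N be integers with k ≥ 0 and N ≥ k + 1. Define g_z(k,N,λ) := (N−z+1)/(N+1) for integers 0 ≤ z ≤ k, and g_z(k,N,λ) := (N−z+1) B_{z,k}(ν)/(N+1) for integers k+1 ≤ z ≤ N+1. Then g_z(k,N,λ) is strictly decreasing in z for 0 ≤ z ≤ N+1; that is, for all integers z, z' with 0 ≤ z < z' ≤ N+1, g_{z'}(k,N,λ) < g_z(k,N,λ). -/
import Mathlib


/-- The binomial cumulative distribution function. -/
noncomputable def binomCDF (z k : ℕ) (p : ℝ) : ℝ :=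
  ∑ j ∈ Finset.range (k + 1), (z.choose j : ℝ) * p ^ j * (1 - p) ^ (z - j)

lemma binomCDF_nonneg (z k : ℕ) {p : ℝ} (h0 : 0 ≤ p) (h1 : p ≤ 1) :
    0 ≤ binomCDF z k p := by
  apply Finset.sum_nonneg
  intro j _
  have : (0:ℝ) ≤ 1 - p := by linarith
  positivity

lemma binomCDF_pos (z k : ℕ) {p : ℝ} (h0 : 0 ≤ p) (h1 : p < 1) :
    0 < binomCDF z k p := by
  have hq : (0:ℝ) < 1 - p := by linarith
  apply Finset.sum_pos'
  · intro j _; positivity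
  · refine ⟨0, Finset.mem_range.mpr (Nat.succ_pos k), ?_⟩
    simp
    positivity

lemma binomCDF_mono_k (z k : ℕ) {p : ℝ} (h0 : 0 ≤ p) (h1 : p ≤ 1) :
    binomCDF z k p ≤ binomCDF z (k+1) p := by
  unfold binomCDF
  apply Finset.sum_le_sum_of_subset_of_nonneg
  · exact Finset.range_subset_range.mpr (by omega)
  · intro j _ _
    have : (0:ℝ) ≤ 1 - p := by linarith
    positivity

lemma binomCDF_le_one (z k : ℕ) (hk : k ≤ z) {p : ℝ} (h0 : 0 ≤ p) (h1 : p ≤ 1) :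
    binomCDF z k p ≤ 1 := by
  have hq : (0:ℝ) ≤ 1 - p := by linarith
  have hfull : (∑ j ∈ Finset.range (z + 1), (z.choose j : ℝ) * p ^ j * (1 - p) ^ (z - j)) = 1 := by
    calc (∑ j ∈ Finset.range (z + 1), (z.choose j : ℝ) * p ^ j * (1 - p) ^ (z - j))
        = (p + (1 - p)) ^ z := by
          rw [add_pow]
          exact Finset.sum_congr rfl (fun j _ => by ring)
      _ = 1 := by norm_num
  calc binomCDF z k p ≤ ∑ j ∈ Finset.range (z + 1), (z.choose j : ℝ) * p ^ j * (1 - p) ^ (z - j) := by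
        apply Finset.sum_le_sum_of_subset_of_nonneg
        · exact Finset.range_subset_range.mpr (by omega)
        · intro j _ _; positivity
    _ = 1 := hfull

lemma binomCDF_succ (z m : ℕ) (p : ℝ) :
    binomCDF (z+1) (m+1) p = (1-p) * binomCDF z (m+1) p + p * binomCDF z m p := by
  unfold binomCDF
  rw [Finset.sum_range_succ' (fun j => ((z+1).choose j : ℝ) * p ^ j * (1 - p) ^ (z+1 - j)),
      Finset.sum_range_succ' (fun j => (z.choose j : ℝ) * p ^ j * (1 - p) ^ (z - j))]
  rw [mul_add, Finset.mul_sum, Finset.mul_sum, add_assoc]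
  have key : ∀ j ∈ Finset.range (m + 1),
      ((z+1).choose (j+1) : ℝ) * p ^ (j+1) * (1 - p) ^ (z+1 - (j+1)) =
      (1 - p) * ((z.choose (j+1) : ℝ) * p ^ (j+1) * (1 - p) ^ (z - (j+1)))
        + p * ((z.choose j : ℝ) * p ^ j * (1 - p) ^ (z - j)) := by
    intro j _
    rw [Nat.choose_succ_succ]
    push_cast
    simp only [Nat.succ_eq_add_one]
    by_cases hjz : j + 1 ≤ z
    · have h2 : z - j = (z - (j+1)) + 1 := by omega
      rw [h2, pow_succ]
      ring
    · have hc1 : (z.choose (j+1) : ℝ) = 0 := by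
        norm_cast; exact Nat.choose_eq_zero_of_lt (by omega)
      have h2 : z - j = 0 := by omega
      rw [hc1, h2]
      ring
  rw [Finset.sum_congr rfl key, Finset.sum_add_distrib]
  have h0 : ((z+1).choose 0 : ℝ) * p ^ 0 * (1 - p) ^ (z+1-0) =
      (1 - p) * ((z.choose 0 : ℝ) * p ^ 0 * (1 - p) ^ (z - 0)) := by
    have : z + 1 - 0 = z - 0 + 1 := by omega
    rw [this, pow_succ]
    simp
    ring
  rw [h0]
  ring

lemma binomCDF_succ_le (z k : ℕ) {p : ℝ} (h0 : 0 ≤ p) (h1 : p ≤ 1) :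
    binomCDF (z+1) k p ≤ binomCDF z k p := by
  have hq0 : (0:ℝ) ≤ 1 - p := by linarith
  cases k with
  | zero =>
      unfold binomCDF
      simp only [Nat.zero_add, Finset.sum_range_one, Nat.choose_zero_right, pow_zero,
        Nat.cast_one, one_mul, Nat.sub_zero]
      exact pow_le_pow_of_le_one hq0 (by linarith) (by omega)
  | succ m =>
      rw [binomCDF_succ]
      have h2 := binomCDF_mono_k z m h0 h1
      nlinarith [binomCDF_nonneg z (m+1) h0 h1]

/-- The function `g_z(k, N, λ)` from the defensive QSV analysis, where `ν = 1 - λ`. -/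
noncomputable def gFun (k N : ℕ) (l : ℝ) (z : ℕ) : ℝ :=
  if z ≤ k then ((N : ℝ) - z + 1) / ((N : ℝ) + 1)
  else ((N : ℝ) - z + 1) * binomCDF z k (1 - l) / ((N : ℝ) + 1)

theorem gFun_strict_anti (l : ℝ) (hl0 : 0 < l) (hl1 : l < 1)
    (k N : ℕ) (hN : k + 1 ≤ N) :
    ∀ z z' : ℕ, z < z' → z' ≤ N + 1 →
      gFun k N l z' < gFun k N l z := by
  have hp0 : (0:ℝ) ≤ 1 - l := by linarith
  have hp1 : 1 - l < 1 := by linarith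
  have hd : (0:ℝ) < (N:ℝ) + 1 := by positivity
  have hstep : ∀ z : ℕ, z ≤ N → gFun k N l (z+1) < gFun k N l z := by
    intro z hz
    have hzR : (z:ℝ) ≤ (N:ℝ) := by exact_mod_cast hz
    unfold gFun
    by_cases h1 : z + 1 ≤ k
    · rw [if_pos h1, if_pos (by omega : z ≤ k), div_lt_div_iff_of_pos_right hd]
      push_cast; linarith
    · rw [if_neg h1]
      by_cases h2 : z ≤ k
      · rw [if_pos h2, div_lt_div_iff_of_pos_right hd]
        have hB1 := binomCDF_le_one (z+1) k (by omega) hp0 (le_of_lt hp1)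
        have hB0 := binomCDF_nonneg (z+1) k hp0 (le_of_lt hp1)
        push_cast
        nlinarith
      · rw [if_neg h2, div_lt_div_iff_of_pos_right hd]
        have hle := binomCDF_succ_le z k hp0 (le_of_lt hp1)
        have hpos := binomCDF_pos z k hp0 hp1
        have hnn := binomCDF_nonneg (z+1) k hp0 (le_of_lt hp1)
        push_cast
        nlinarith [mul_le_mul_of_nonneg_left hle (by linarith : (0:ℝ) ≤ (N:ℝ) - z)]
  intro z z' hlt hle
  induction z' with
  | zero => omega
  | succ n ih =>
    rcases Nat.lt_or_ge z n with h | h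
    · exact lt_trans (hstep n (by omega)) (ih h (by omega))
    · have hzn : z = n := by omega
      subst hzn
      exact hstep z (by omega)
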